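/- Let u = φˣ ⊗ φʸ be a nonzero element of the Hartree manifold M = {φˣ ⊗ φʸ : φˣ ∈ L²(ℝ^{d₁}), φʸ ∈ L²(ℝ^{d₂})}. Then every tangent vector v of M at u can be written in the form v = vˣ ⊗ φʸ + φˣ ⊗ vʸ with vˣ ∈ L²(ℝ^{d₁}), vʸ ∈ L²(ℝ^{d₂}), and this representation is unique under the gauge condition ⟨φˣ, vˣ⟩_{L²} = 0. -/

import Mathlib

/-!
If `a(x) ψ(y) + φ(x) b(y) = 0` almost everywhere with `φ, ψ ≠ 0`, then evaluating at a slice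
`x₀` with `φ(x₀) ≠ 0` shows `b ∝ ψ`, and then `a ∝ φ` with the opposite constant. Applied to
`f ⊗ g = φˣ ⊗ φʸ`, this forces the curve to pass through `(c φˣ, c⁻¹ φʸ)`, so the product rule
writes the tangent vector as `a ⊗ φʸ + φˣ ⊗ b`. The same fact shows that the only freedom in such
a representation is `(a, b) ↦ (a + γ φˣ, b - γ φʸ)`, and the gauge `⟪φˣ, a⟫ = 0` fixes `γ`.
-/

open MeasureTheory Filter

section Pointwise

variable {α β 𝕜 : Type*} [MeasurableSpace α] [MeasurableSpace β] [Field 𝕜]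
  {μ : Measure α} {ν : Measure β} [SFinite ν]

theorem ae_eq_smul_of_ae_mul_add_mul_eq_zero {a f : α → 𝕜} {b g : β → 𝕜}
    (H : ∀ᵐ p ∂μ.prod ν, a p.1 * g p.2 + f p.1 * b p.2 = 0)
    (hf : ¬f =ᵐ[μ] 0) (hg : ¬g =ᵐ[ν] 0) :
    ∃ c : 𝕜, a =ᵐ[μ] c • f ∧ b =ᵐ[ν] -c • g := by
  have H' := Measure.ae_ae_of_ae_prod H
  obtain ⟨x₀, hfx₀ : f x₀ ≠ 0, hx₀⟩ := ((not_eventually.1 hf).and_eventually H').exists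
  set c := a x₀ / f x₀
  have hb : b =ᵐ[ν] -c • g := by
    filter_upwards [hx₀] with y hy
    simp only [Pi.smul_apply, smul_eq_mul, c]
    field_simp
    linear_combination hy
  refine ⟨c, ?_, hb⟩
  filter_upwards [H'] with x hx
  obtain ⟨y, hgy, hy⟩ := ((not_eventually.1 hg).and_eventually (hx.and hb)).exists
  simp only [Pi.smul_apply, smul_eq_mul] at hy ⊢
  exact mul_right_cancel₀ hgy (by linear_combination hy.1 - f x * hy.2)

end Pointwise

section Tensor

variable {α β : Type*} [MeasurableSpace α] [MeasurableSpace β] {μ : Measure α} {ν : Measure β}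
  [SFinite ν] {T : Lp ℂ 2 μ →L[ℂ] Lp ℂ 2 ν →L[ℂ] Lp ℂ 2 (μ.prod ν)}

theorem eq_smul_of_tensor_add_tensor_eq_zero
    (hT : ∀ f g, ⇑(T f g) =ᵐ[μ.prod ν] fun p => f p.1 * g p.2)
    {a φ : Lp ℂ 2 μ} {b ψ : Lp ℂ 2 ν} (hφ : φ ≠ 0) (hψ : ψ ≠ 0)
    (h : T a ψ + T φ b = 0) : ∃ c : ℂ, a = c • φ ∧ b = -c • ψ := by
  have H : ∀ᵐ p ∂μ.prod ν, a p.1 * ψ p.2 + φ p.1 * b p.2 = 0 := by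
    filter_upwards [Lp.coeFn_add (T a ψ) (T φ b), hT a ψ, hT φ b,
      h ▸ Lp.coeFn_zero ℂ 2 (μ.prod ν)] with p hadd ha hb h0
    rw [← ha, ← hb, ← Pi.add_apply, ← hadd, h0, Pi.zero_apply]
  obtain ⟨c, hac, hbc⟩ := ae_eq_smul_of_ae_mul_add_mul_eq_zero H
    (mt Lp.eq_zero_iff_ae_eq_zero.2 hφ) (mt Lp.eq_zero_iff_ae_eq_zero.2 hψ)
  exact ⟨c, Lp.ext (hac.trans (Lp.coeFn_smul c φ).symm),
    Lp.ext (hbc.trans (Lp.coeFn_smul (-c) ψ).symm)⟩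

theorem exists_smul_of_tensor_eq
    (hT : ∀ f g, ⇑(T f g) =ᵐ[μ.prod ν] fun p => f p.1 * g p.2)
    {f φ : Lp ℂ 2 μ} {g ψ : Lp ℂ 2 ν} (hφ : φ ≠ 0) (hg : g ≠ 0) (h : T f g = T φ ψ) :
    ∃ c : ℂ, f = c • φ ∧ ψ = c • g := by
  obtain ⟨c, hf, hψ⟩ := eq_smul_of_tensor_add_tensor_eq_zero (a := f) (b := ψ) hT
    (neg_ne_zero.2 hφ) hg (by rw [map_neg, neg_apply, h, add_neg_cancel])
  exact ⟨-c, by rw [hf, smul_neg, neg_smul], hψ⟩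

theorem eq_zero_of_tensor_add_tensor_eq_zero_of_inner_eq_zero
    (hT : ∀ f g, ⇑(T f g) =ᵐ[μ.prod ν] fun p => f p.1 * g p.2)
    {a φ : Lp ℂ 2 μ} {b ψ : Lp ℂ 2 ν} (hφ : φ ≠ 0) (hψ : ψ ≠ 0)
    (hgauge : inner ℂ φ a = 0) (h : T a ψ + T φ b = 0) : a = 0 ∧ b = 0 := by
  obtain ⟨c, rfl, rfl⟩ := eq_smul_of_tensor_add_tensor_eq_zero hT hφ hψ h
  rw [inner_smul_right, mul_eq_zero, or_iff_left (inner_self_ne_zero.2 hφ)] at hgauge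
  simp [hgauge]

theorem existsUnique_gauge_tensor_add_tensor
    (hT : ∀ f g, ⇑(T f g) =ᵐ[μ.prod ν] fun p => f p.1 * g p.2)
    {φ : Lp ℂ 2 μ} {ψ : Lp ℂ 2 ν} (hφ : φ ≠ 0) (hψ : ψ ≠ 0) (a : Lp ℂ 2 μ) (b : Lp ℂ 2 ν) :
    ∃! p : Lp ℂ 2 μ × Lp ℂ 2 ν, inner ℂ φ p.1 = 0 ∧ T a ψ + T φ b = T p.1 ψ + T φ p.2 := by
  refine existsUnique_of_exists_of_unique ?_ fun p q hp hq => ?_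
  · obtain ⟨γ, hγ⟩ : ∃ γ : ℂ, inner ℂ φ (a - γ • φ) = 0 :=
      ⟨inner ℂ φ a / inner ℂ φ φ, by
        rw [inner_sub_right, inner_smul_right, div_mul_cancel₀ _ (inner_self_ne_zero.2 hφ),
          sub_self]⟩
    refine ⟨(a - γ • φ, b + γ • ψ), hγ, ?_⟩
    simp only [map_sub, map_add, map_smul, sub_apply, smul_apply]
    abel
  · have hpq : T (p.1 - q.1) ψ + T φ (p.2 - q.2) = 0 := by
      rw [map_sub, map_sub, sub_apply, ← sub_eq_zero.2 (hp.2.symm.trans hq.2)]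
      abel
    obtain ⟨h1, h2⟩ := eq_zero_of_tensor_add_tensor_eq_zero_of_inner_eq_zero hT hφ hψ
      (by rw [inner_sub_right, hp.1, hq.1, sub_zero]) hpq
    exact Prod.ext (sub_eq_zero.1 h1) (sub_eq_zero.1 h2)

theorem exists_eq_tensor_add_tensor_of_hasDerivAt
    (hT : ∀ f g, ⇑(T f g) =ᵐ[μ.prod ν] fun p => f p.1 * g p.2)
    {φ : Lp ℂ 2 μ} {ψ : Lp ℂ 2 ν} (hu : T φ ψ ≠ 0) {Γ : ℝ → Lp ℂ 2 μ × Lp ℂ 2 ν}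
    {dΓ : Lp ℂ 2 μ × Lp ℂ 2 ν} {v : Lp ℂ 2 (μ.prod ν)} {t : ℝ}
    (hΓt : T (Γ t).1 (Γ t).2 = T φ ψ) (hΓ : HasDerivAt Γ dΓ t)
    (hv : HasDerivAt (fun s => T (Γ s).1 (Γ s).2) v t) :
    ∃ a b, v = T a ψ + T φ b := by
  have hv' : v = T (Γ t).1 dΓ.2 + T dΓ.1 (Γ t).2 :=
    hv.unique ((T.bilinearRestrictScalars ℝ).hasDerivAt_of_bilinear
      (fun _ => hasFDerivAt_fst.comp_hasDerivAt (f := Γ) t hΓ)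
      fun _ => hasFDerivAt_snd.comp_hasDerivAt (f := Γ) t hΓ)
  obtain ⟨c, hΓ₁, hψ⟩ := exists_smul_of_tensor_eq hT (fun h => hu (by simp [h]))
    (fun h => hu (by simp [← hΓt, h])) hΓt
  have hc : c ≠ 0 := by
    rintro rfl
    exact hu (by simp [hψ])
  have hΓ₂ : (Γ t).2 = c⁻¹ • ψ := by rw [hψ, inv_smul_smul₀ hc]
  refine ⟨c⁻¹ • dΓ.1, c • dΓ.2, ?_⟩
  rw [hv', hΓ₁, hΓ₂]
  simp only [map_smul, smul_apply]
  exact add_comm _ _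

end Tensor

/-- every tangent vector of the Hartree manifold at a nonzero product state
`u = φˣ ⊗ φʸ` has a unique representation `v = vˣ ⊗ φʸ + φˣ ⊗ vʸ` under the gauge
condition `⟨φˣ, vˣ⟩ = 0`.  The tensor product `⊗ : L² × L² → L²(product)` is any
continuous bilinear map agreeing a.e. with `(x,y) ↦ f(x)g(y)`, and tangent vectors
are derivatives at `s = 0` of (differentiable) curves `s ↦ φˣ(s) ⊗ φʸ(s)` with
`φˣ(0) ⊗ φʸ(0) = u`. -/
theorem stmt_0 (d₁ d₂ : ℕ)
    (T : Lp ℂ 2 (volume : Measure (EuclideanSpace ℝ (Fin d₁))) →L[ℂ]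
         Lp ℂ 2 (volume : Measure (EuclideanSpace ℝ (Fin d₂))) →L[ℂ]
         Lp ℂ 2 ((volume : Measure (EuclideanSpace ℝ (Fin d₁))).prod
            (volume : Measure (EuclideanSpace ℝ (Fin d₂)))))
    (hT : ∀ f g, ⇑(T f g)
        =ᵐ[(volume : Measure (EuclideanSpace ℝ (Fin d₁))).prod
            (volume : Measure (EuclideanSpace ℝ (Fin d₂)))]
        fun p => f p.1 * g p.2)
    (φx : Lp ℂ 2 (volume : Measure (EuclideanSpace ℝ (Fin d₁))))
    (φy : Lp ℂ 2 (volume : Measure (EuclideanSpace ℝ (Fin d₂))))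
    (hu : T φx φy ≠ 0)
    (v : Lp ℂ 2 ((volume : Measure (EuclideanSpace ℝ (Fin d₁))).prod
            (volume : Measure (EuclideanSpace ℝ (Fin d₂)))))
    (hv : ∃ (Γ : ℝ → Lp ℂ 2 (volume : Measure (EuclideanSpace ℝ (Fin d₁))) ×
                    Lp ℂ 2 (volume : Measure (EuclideanSpace ℝ (Fin d₂))))
          (dΓ : Lp ℂ 2 (volume : Measure (EuclideanSpace ℝ (Fin d₁))) ×
                Lp ℂ 2 (volume : Measure (EuclideanSpace ℝ (Fin d₂)))),
        T (Γ 0).1 (Γ 0).2 = T φx φy ∧ HasDerivAt Γ dΓ 0 ∧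
        HasDerivAt (fun s => T (Γ s).1 (Γ s).2) v 0) :
    ∃! p : Lp ℂ 2 (volume : Measure (EuclideanSpace ℝ (Fin d₁))) ×
           Lp ℂ 2 (volume : Measure (EuclideanSpace ℝ (Fin d₂))),
      (inner ℂ φx p.1 : ℂ) = 0 ∧ v = T p.1 φy + T φx p.2 := by
  obtain ⟨Γ, dΓ, hΓ0, hΓ, hvΓ⟩ := hv
  obtain ⟨a, b, rfl⟩ := exists_eq_tensor_add_tensor_of_hasDerivAt hT hu hΓ0 hΓ hvΓ
  exact existsUnique_gauge_tensor_add_tensor hT (fun h => hu (by simp [h]))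
    (fun h => hu (by simp [h])) a b
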